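/- arXiv:1305.4296 — 3 statements merged into one kernel-verified Lean document; each statement's English description precedes it below -/
import Mathlib

section
/- Let (a_n), (x_n), (b_n), (y_n) be MARP sequences with starting point y_{−1}, let n ∈ ℕ, and let θ ∈ [0,1] be such that ⟨x_{n+1} − y_n, x_n − y_n⟩ ≤ θ‖x_{n+1} − y_n‖·‖y_n − x_n‖. Then ‖y_{n+1} − x_{n+1}‖ ≤ (μ_{n+1}/μ_n)·√(μ_n² + (1−μ_n)² + 2θμ_n(1−μ_n)) · max{‖x_{n+1} − y_n‖, ‖y_n − x_n‖}. -/
open Filter Topology RealInnerProductSpace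

/-- The set of nearest points of `u` in `C`. -/
def projSet {X : Type*} [NormedAddCommGroup X] (C : Set X) (u : X) : Set X :=
  {c ∈ C | ‖u - c‖ = Metric.infDist u C}

/-- MARP sequences: here `Y n` denotes `y_{n-1}`, so `Y 0 = y_{-1}` is the starting
point and `Y (n+1) = y_n`. -/
def IsMARP {X : Type*} [NormedAddCommGroup X] [NormedSpace ℝ X]
    (A B : Set X) (lam mu : ℕ → ℝ) (a x b Y : ℕ → X) : Prop :=
  ∀ n : ℕ, a n ∈ projSet A (Y n) ∧ x n = (1 - lam n) • Y n + lam n • a n ∧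
    b n ∈ projSet B (x n) ∧ Y (n + 1) = (1 - mu n) • x n + mu n • b n

/-!
Write `u = x_{n+1} - y_n` and `v = x_n - y_n`. Since `y_n = (1 - μ_n) x_n + μ_n b_n`, we have
`μ_n (x_{n+1} - b_n) = μ_n u + (1 - μ_n) v`, and the angle condition bounds the norm of this
combination by `√(μ_n² + (1 - μ_n)² + 2θμ_n(1 - μ_n)) · max ‖u‖ ‖v‖`. Finally
`‖y_{n+1} - x_{n+1}‖ = μ_{n+1} d_B(x_{n+1}) ≤ μ_{n+1} ‖x_{n+1} - b_n‖` because `b_n ∈ B`.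
-/

theorem norm_sub_le_of_mem_projSet {X : Type*} [NormedAddCommGroup X] {C : Set X} {u c p : X}
    (hc : c ∈ projSet C u) (hp : p ∈ C) : ‖u - c‖ ≤ ‖u - p‖ := by
  rw [hc.2, ← dist_eq_norm]
  exact Metric.infDist_le_dist_of_mem hp

theorem norm_smul_add_smul_le_sqrt_mul_max {X : Type*} [NormedAddCommGroup X]
    [InnerProductSpace ℝ X] {u v : X} {s t θ : ℝ} (hs : 0 ≤ s) (ht : 0 ≤ t) (hθ : 0 ≤ θ)
    (hang : ⟪u, v⟫ ≤ θ * ‖u‖ * ‖v‖) :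
    ‖s • u + t • v‖ ≤ Real.sqrt (s ^ 2 + t ^ 2 + 2 * θ * s * t) * max ‖u‖ ‖v‖ := by
  set M := max ‖u‖ ‖v‖
  have hu : ‖u‖ ≤ M := le_max_left _ _
  have hv : ‖v‖ ≤ M := le_max_right _ _
  have huv : ‖u‖ * ‖v‖ ≤ M ^ 2 := by
    rw [sq]; exact mul_le_mul hu hv (norm_nonneg v) ((norm_nonneg u).trans hu)
  have hexpand : ‖s • u + t • v‖ ^ 2 = s ^ 2 * ‖u‖ ^ 2 + t ^ 2 * ‖v‖ ^ 2 + 2 * s * t * ⟪u, v⟫ := by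
    rw [norm_add_sq_real, real_inner_smul_left, real_inner_smul_right, norm_smul, norm_smul,
      Real.norm_of_nonneg hs, Real.norm_of_nonneg ht]
    ring
  have hsq : ‖s • u + t • v‖ ^ 2 ≤ (s ^ 2 + t ^ 2 + 2 * θ * s * t) * M ^ 2 := by
    have hst : 0 ≤ 2 * s * t := by positivity
    rw [hexpand]
    have hcross : 2 * s * t * ⟪u, v⟫ ≤ 2 * s * t * (θ * M ^ 2) :=
      mul_le_mul_of_nonneg_left (hang.trans (by rw [mul_assoc]; gcongr)) hst
    nlinarith [pow_le_pow_left₀ (norm_nonneg u) hu 2, pow_le_pow_left₀ (norm_nonneg v) hv 2]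
  rw [← Real.sqrt_sq (norm_nonneg _), ← Real.sqrt_sq ((norm_nonneg u).trans hu),
    ← Real.sqrt_mul (by positivity)]
  exact Real.sqrt_le_sqrt hsq

theorem marp_one_step_estimate'_general
    {X : Type*} [NormedAddCommGroup X] [InnerProductSpace ℝ X]
    (A B : Set X)
    (lam mu : ℕ → ℝ)
    (hmu : ∀ n, mu n ∈ Set.Ioc (0 : ℝ) 1)
    (a x b Y : ℕ → X) (hMARP : IsMARP A B lam mu a x b Y)
    (n : ℕ) (θ : ℝ) (hθ : θ ∈ Set.Icc (0 : ℝ) 1)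
    (hang : ⟪x (n + 1) - Y (n + 1), x n - Y (n + 1)⟫ ≤
      θ * ‖x (n + 1) - Y (n + 1)‖ * ‖Y (n + 1) - x n‖) :
    ‖Y (n + 2) - x (n + 1)‖ ≤
      (mu (n + 1) / mu n) *
        Real.sqrt ((mu n) ^ 2 + (1 - mu n) ^ 2 + 2 * θ * mu n * (1 - mu n)) *
          max (‖x (n + 1) - Y (n + 1)‖) (‖Y (n + 1) - x n‖) := by
  obtain ⟨-, -, hbB, hY⟩ := hMARP n
  obtain ⟨-, -, hbB', hY'⟩ := hMARP (n + 1)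
  obtain ⟨hμ, hμ1⟩ := hmu n
  have hν := (hmu (n + 1)).1
  have hdistB : ‖Y (n + 2) - x (n + 1)‖ ≤ mu (n + 1) * ‖x (n + 1) - b n‖ := by
    have hstep : Y (n + 2) - x (n + 1) = mu (n + 1) • (b (n + 1) - x (n + 1)) := by
      rw [hY']; module
    rw [hstep, norm_smul_of_nonneg hν.le, norm_sub_rev]
    exact mul_le_mul_of_nonneg_left (norm_sub_le_of_mem_projSet hbB' hbB.1) hν.le
  have hcomb : mu n • (x (n + 1) - b n) =
      mu n • (x (n + 1) - Y (n + 1)) + (1 - mu n) • (x n - Y (n + 1)) := by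
    rw [hY]; module
  have hbound := norm_smul_add_smul_le_sqrt_mul_max (u := x (n + 1) - Y (n + 1))
    (v := x n - Y (n + 1)) hμ.le (sub_nonneg.2 hμ1) hθ.1 (by rwa [norm_sub_rev (x n)])
  rw [← hcomb, norm_smul_of_nonneg hμ.le, norm_sub_rev (x n)] at hbound
  calc ‖Y (n + 2) - x (n + 1)‖ ≤ mu (n + 1) * ‖x (n + 1) - b n‖ := hdistB
    _ = mu (n + 1) / mu n * (mu n * ‖x (n + 1) - b n‖) := by field_simp
    _ ≤ _ := by rw [mul_assoc]; gcongr

/-- Lemma 3.9: the companion one-step contraction estimate for the MARP. -/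
theorem marp_one_step_estimate'
    {X : Type*} [NormedAddCommGroup X] [InnerProductSpace ℝ X] [FiniteDimensional ℝ X]
    (A B : Set X) (hA : A.Nonempty) (hAclosed : IsClosed A)
    (hB : B.Nonempty) (hBclosed : IsClosed B)
    (lam mu : ℕ → ℝ) (hlam : ∀ n, lam n ∈ Set.Ioc (0 : ℝ) 1)
    (hmu : ∀ n, mu n ∈ Set.Ioc (0 : ℝ) 1)
    (a x b Y : ℕ → X) (hMARP : IsMARP A B lam mu a x b Y)
    (n : ℕ) (θ : ℝ) (hθ : θ ∈ Set.Icc (0 : ℝ) 1)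
    (hang : ⟪x (n + 1) - Y (n + 1), x n - Y (n + 1)⟫ ≤
      θ * ‖x (n + 1) - Y (n + 1)‖ * ‖Y (n + 1) - x n‖) :
    ‖Y (n + 2) - x (n + 1)‖ ≤
      (mu (n + 1) / mu n) *
        Real.sqrt ((mu n) ^ 2 + (1 - mu n) ^ 2 + 2 * θ * mu n * (1 - mu n)) *
          max (‖x (n + 1) - Y (n + 1)‖) (‖Y (n + 1) - x n‖) :=
  marp_one_step_estimate'_general A B lam mu hmu a x b Y hMARP n θ hθ hang
end

section
/- Let S ⊆ X be both A-projection absorbing and B-projection absorbing, let (λ_n) and (μ_n) be nonincreasing sequences in (0,1] with limits λ_∞ and μ_∞, and assume 1 > α_0 := max{λ_0, μ_0} and α_∞ := min{λ_∞, μ_∞} > 0. Assume there exists θ ∈ [0,1) such that for every x ∈ S, every a ∈ P_A(x) and every b ∈ P_B(x), ⟨a−x, x−b⟩ ≤ θ‖a−x‖·‖x−b‖. Then for every starting point y_{−1} ∈ S, the MARP sequences (x_n) and (y_n) converge linearly with rate ρ̂ to some point of A ∩ B, where ρ̂ ∈ (0,1) is defined by ρ̂² := sup_{n∈ℕ} max{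 (λ_{n+1}/λ_n)²·(λ_n² + (1−λ_n)² + 2θλ_n(1−λ_n)), (μ_{n+1}/μ_n)²·(μ_n² + (1−μ_n)² + 2θμ_n(1−μ_n)) }. In particular, A ∩ B ≠ ∅. -/
open Filter Topology RealInnerProductSpace

/-- `S` is `A`-projection absorbing. -/
def ProjAbsorbing {X : Type*} [NormedAddCommGroup X] [NormedSpace ℝ X]
    (A S : Set X) : Prop :=
  ∀ s ∈ S, ∀ a ∈ projSet A s, segment ℝ s a ⊆ S

/-!
Each MARP half-step moves a point part of the way towards one of its projections, and that
projection stays a projection of every point of the segment, so the angle condition applies at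
`x_n` and at `y_n` with both projections at hand. There the cosine law bounds the distance from
the next iterate to the old projection, hence to the set, by the two previous step lengths;
rescaled by the relaxation parameters, the larger of two consecutive step lengths contracts by
the factor `ρ̂`. Geometric decay makes `(x_n)` Cauchy with a linearly converging limit, which lies
in `A` and in `B` because the distances to these closed sets are at most the step lengths divided
by `λ_∞` and `μ_∞`.
-/

open AffineMap

section Projection

variable {X : Type*} [NormedAddCommGroup X] {C : Set X} {u p c : X}

lemma dist_eq_infDist_of_mem_projSet (hp : p ∈ projSet C u) : dist u p = Metric.infDist u C := by
  rw [dist_eq_norm]; exact hp.2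

lemma dist_le_of_mem_projSet (hp : p ∈ projSet C u) (hc : c ∈ C) : dist u p ≤ dist u c :=
  (dist_eq_infDist_of_mem_projSet hp).trans_le (Metric.infDist_le_dist_of_mem hc)

variable [NormedSpace ℝ X]

lemma mem_projSet_lineMap (hp : p ∈ projSet C u) {t : ℝ} (ht : t ∈ Set.Icc (0 : ℝ) 1) :
    p ∈ projSet C (lineMap u p t) := by
  obtain ⟨ht0, ht1⟩ := ht
  refine ⟨hp.1, le_antisymm ?_ (Metric.infDist_le_dist_of_mem hp.1 |>.trans_eq (dist_eq_norm _ _))⟩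
  have htri := Metric.infDist_le_infDist_add_dist (s := C) (x := u) (y := lineMap u p t)
  rw [← dist_eq_infDist_of_mem_projSet hp, dist_left_lineMap, Real.norm_of_nonneg ht0] at htri
  rw [← dist_eq_norm, dist_lineMap_right, Real.norm_of_nonneg (by linarith)]
  linarith

lemma dist_le_div_of_dist_lineMap_le {r t K : ℝ} (hr : 0 < r) (hrt : r ≤ t)
    (h : dist u (lineMap u p t) ≤ K) : dist u p ≤ K / r := by
  rw [dist_left_lineMap] at h
  rw [le_div_iff₀ hr]
  nlinarith [dist_nonneg (x := u) (y := p), Real.le_norm_self t]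

end Projection

def relaxFactor (θ t : ℝ) : ℝ := t ^ 2 + (1 - t) ^ 2 + 2 * θ * t * (1 - t)

lemma relaxFactor_eq (θ t : ℝ) : relaxFactor θ t = 1 - 2 * (1 - θ) * (t * (1 - t)) := by
  unfold relaxFactor; ring

lemma relaxFactor_pos {θ t : ℝ} (hθ : 0 ≤ θ) (ht0 : 0 ≤ t) (ht1 : t ≤ 1) :
    0 < relaxFactor θ t := by
  unfold relaxFactor
  nlinarith [sq_nonneg (2 * t - 1), mul_nonneg (mul_nonneg hθ ht0) (sub_nonneg.2 ht1)]

lemma weighted_sq_le_relaxFactor_mul {θ t a b m : ℝ} (hθ : 0 ≤ θ) (ht0 : 0 ≤ t) (ht1 : t ≤ 1)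
    (ha : 0 ≤ a) (hb : 0 ≤ b) (ham : a ≤ m) (hbm : b ≤ m) :
    (1 - t) ^ 2 * a ^ 2 + t ^ 2 * b ^ 2 + 2 * θ * t * (1 - t) * a * b ≤
      relaxFactor θ t * m ^ 2 := by
  have ha2 : a ^ 2 ≤ m ^ 2 := pow_le_pow_left₀ ha ham 2
  have hb2 : b ^ 2 ≤ m ^ 2 := pow_le_pow_left₀ hb hbm 2
  have hab : a * b ≤ m ^ 2 := by nlinarith
  have hc : 0 ≤ 2 * θ * t * (1 - t) := by have := sub_nonneg.2 ht1; positivity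
  unfold relaxFactor
  nlinarith [mul_le_mul_of_nonneg_left ha2 (sq_nonneg (1 - t)),
    mul_le_mul_of_nonneg_left hb2 (sq_nonneg t), mul_le_mul_of_nonneg_left hab hc]

section Relaxation

variable {X : Type*} [NormedAddCommGroup X] [InnerProductSpace ℝ X]

lemma dist_lineMap_sq_le {z p q : X} {s θ : ℝ} (hs : 0 ≤ s)
    (hangle : ⟪p - z, z - q⟫ ≤ θ * ‖p - z‖ * ‖z - q‖) :
    dist (lineMap z q s) p ^ 2 ≤
      dist z p ^ 2 + dist z (lineMap z q s) ^ 2 + 2 * θ * dist z p * dist z (lineMap z q s) := by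
  have hsplit : lineMap z q s - p = (z - p) + s • (q - z) := by
    rw [lineMap_apply_module]; module
  have hinner : ⟪z - p, q - z⟫ = ⟪p - z, z - q⟫ := by
    rw [← inner_neg_neg, neg_sub, neg_sub]
  rw [dist_left_lineMap, Real.norm_of_nonneg hs, dist_eq_norm, hsplit, norm_add_sq_real,
    real_inner_smul_right, hinner, norm_smul, Real.norm_of_nonneg hs, dist_eq_norm,
    dist_eq_norm, norm_sub_rev z p, norm_sub_rev q z]
  nlinarith [mul_le_mul_of_nonneg_left hangle (by positivity : (0 : ℝ) ≤ 2 * s)]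

-- Three successive relaxed steps `u → z → w → lineMap w p' t'`, the first and last towards `C`:
-- the point `p` of the first step still competes with the projection `p'` at `w`.
lemma dist_relaxedStep_le {C : Set X} {u p z q w p' : X} {t s t' θ ρ : ℝ}
    (hpC : p ∈ C) (ht0 : 0 < t) (ht1 : t ≤ 1) (hz : z = lineMap u p t) (hθ : 0 ≤ θ)
    (hangle : ⟪p - z, z - q⟫ ≤ θ * ‖p - z‖ * ‖z - q‖) (hs : 0 ≤ s) (hw : w = lineMap z q s)
    (hp' : p' ∈ projSet C w) (ht' : 0 ≤ t') (hρ0 : 0 ≤ ρ)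
    (hρ : (t' / t) ^ 2 * relaxFactor θ t ≤ ρ ^ 2) :
    dist w (lineMap w p' t') ≤ ρ * max (dist u z) (dist z w) := by
  set m := max (dist u z) (dist z w)
  have huz : dist u z = t * dist u p := by rw [hz, dist_left_lineMap, Real.norm_of_nonneg ht0.le]
  have hzp : dist z p = (1 - t) * dist u p := by
    rw [hz, dist_lineMap_right, Real.norm_of_nonneg (by linarith)]
  have hsq : dist w (lineMap w p' t') ^ 2 ≤ (ρ * m) ^ 2 := calc
    dist w (lineMap w p' t') ^ 2 = t' ^ 2 * dist w p' ^ 2 := by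
      rw [dist_left_lineMap, Real.norm_of_nonneg ht', mul_pow]
    _ ≤ t' ^ 2 * dist w p ^ 2 := by
      gcongr; exact dist_le_of_mem_projSet hp' hpC
    _ ≤ t' ^ 2 * (dist z p ^ 2 + dist z w ^ 2 + 2 * θ * dist z p * dist z w) := by
      rw [hw]; gcongr; exact dist_lineMap_sq_le hs hangle
    _ = (t' / t) ^ 2 * ((1 - t) ^ 2 * dist u z ^ 2 + t ^ 2 * dist z w ^ 2
          + 2 * θ * t * (1 - t) * dist u z * dist z w) := by
      rw [hzp, huz]; field_simp
    _ ≤ (t' / t) ^ 2 * (relaxFactor θ t * m ^ 2) := by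
      gcongr
      exact weighted_sq_le_relaxFactor_mul hθ ht0.le ht1 dist_nonneg dist_nonneg
        (le_max_left _ _) (le_max_right _ _)
    _ ≤ (ρ * m) ^ 2 := by
      rw [← mul_assoc, mul_pow]; gcongr
  exact (pow_le_pow_iff_left₀ dist_nonneg (by positivity) two_ne_zero).1 hsq

end Relaxation

noncomputable def marpRate (θ : ℝ) (r : ℕ → ℝ) (n : ℕ) : ℝ :=
  (r (n + 1) / r n) ^ 2 * relaxFactor θ (r n)

section Rate

variable {θ : ℝ} {r : ℕ → ℝ}

lemma marpRate_pos (hθ : 0 ≤ θ) (hr : ∀ n, r n ∈ Set.Ioc (0 : ℝ) 1) (n : ℕ) :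
    0 < marpRate θ r n :=
  mul_pos (pow_pos (div_pos (hr (n + 1)).1 (hr n).1) 2)
    (relaxFactor_pos hθ (hr n).1.le (hr n).2)

lemma exists_lt_one_forall_marpRate_le (hθ : θ ∈ Set.Ico (0 : ℝ) 1)
    (hr : ∀ n, r n ∈ Set.Ioc (0 : ℝ) 1) (hanti : Antitone r) {rinf : ℝ}
    (hlim : Tendsto r atTop (𝓝 rinf)) (hrinf : 0 < rinf) (hr0 : r 0 < 1) :
    ∃ κ < 1, ∀ n, marpRate θ r n ≤ κ := by
  obtain ⟨hθ0, hθ1⟩ := hθ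
  refine ⟨1 - 2 * (1 - θ) * (rinf * (1 - r 0)),
    sub_lt_self _ (by have := sub_pos.2 hθ1; have := sub_pos.2 hr0; positivity), fun n => ?_⟩
  obtain ⟨hrn, hrn1⟩ := hr n
  have hratio : (r (n + 1) / r n) ^ 2 ≤ 1 :=
    pow_le_one₀ (div_nonneg (hr (n + 1)).1.le hrn.le) ((div_le_one hrn).2 (hanti n.le_succ))
  have hprod : rinf * (1 - r 0) ≤ r n * (1 - r n) :=
    mul_le_mul (hanti.le_of_tendsto hlim n) (by linarith [hanti n.zero_le]) (sub_nonneg.2 hr0.le)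
      hrn.le
  calc marpRate θ r n ≤ 1 * relaxFactor θ (r n) :=
        mul_le_mul_of_nonneg_right hratio (relaxFactor_pos hθ0 hrn.le hrn1).le
    _ ≤ 1 - 2 * (1 - θ) * (rinf * (1 - r 0)) := by
      rw [one_mul, relaxFactor_eq]
      nlinarith [mul_le_mul_of_nonneg_left hprod (by linarith : (0 : ℝ) ≤ 2 * (1 - θ))]

end Rate

lemma sqrt_iSup_max_bounds {f g : ℕ → ℝ} {ρ : ℝ} (hf0 : 0 < f 0)
    (hf : ∃ κ < 1, ∀ n, f n ≤ κ) (hg : ∃ κ < 1, ∀ n, g n ≤ κ)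
    (hρ : ρ = √(⨆ n, max (f n) (g n))) :
    0 < ρ ∧ ρ < 1 ∧ ∀ n, f n ≤ ρ ^ 2 ∧ g n ≤ ρ ^ 2 := by
  obtain ⟨κf, hκf, hf⟩ := hf
  obtain ⟨κg, hκg, hg⟩ := hg
  have hmax n : max (f n) (g n) ≤ max κf κg := max_le_max (hf n) (hg n)
  have hle : ∀ n, max (f n) (g n) ≤ ⨆ n, max (f n) (g n) :=
    le_ciSup ⟨_, by rintro _ ⟨n, rfl⟩; exact hmax n⟩
  have hpos : 0 < ⨆ n, max (f n) (g n) := hf0.trans_le ((le_max_left _ _).trans (hle 0))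
  have hsq : ρ ^ 2 = ⨆ n, max (f n) (g n) := by rw [hρ, Real.sq_sqrt hpos.le]
  refine ⟨hρ ▸ Real.sqrt_pos.2 hpos, ?_, fun n => ?_⟩
  · rw [hρ, Real.sqrt_lt' one_pos, one_pow]
    exact (ciSup_le hmax).trans_lt (max_lt hκf hκg)
  · rw [hsq]
    exact ⟨(le_max_left _ _).trans (hle n), (le_max_right _ _).trans (hle n)⟩

section Metric

variable {α : Type*} [PseudoMetricSpace α]

lemma exists_dist_le_geometric_of_alternating [CompleteSpace α] {x y : ℕ → α} {C ρ : ℝ}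
    (hρ : ρ < 1) (hxy : ∀ n, dist (x n) (y n) ≤ C * ρ ^ n)
    (hyx : ∀ n, dist (y n) (x (n + 1)) ≤ C * ρ ^ n) :
    ∃ c, ∃ M, 0 ≤ M ∧ ∀ n, dist (x n) c ≤ M * ρ ^ n ∧ dist (y n) c ≤ M * ρ ^ n := by
  have hC : 0 ≤ C := by simpa using dist_nonneg.trans (hxy 0)
  have hxx : ∀ n, dist (x n) (x (n + 1)) ≤ 2 * C * ρ ^ n := fun n => by
    linarith [dist_triangle (x n) (y n) (x (n + 1)), hxy n, hyx n]
  obtain ⟨c, hc⟩ := cauchySeq_tendsto_of_complete (cauchySeq_of_le_geometric ρ _ hρ hxx)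
  have hxc := dist_le_of_le_geometric_of_tendsto ρ _ hρ hxx hc
  have hK : 0 ≤ 2 * C / (1 - ρ) := div_nonneg (by linarith) (by linarith)
  refine ⟨c, C + 2 * C / (1 - ρ), by linarith, fun n => ⟨?_, ?_⟩⟩ <;>
  · have hCρ : 0 ≤ C * ρ ^ n := dist_nonneg.trans (hxy n)
    have hsplit : (C + 2 * C / (1 - ρ)) * ρ ^ n = C * ρ ^ n + 2 * C * ρ ^ n / (1 - ρ) := by ring
    linarith [dist_triangle_left (y n) c (x n), hxy n, hxc n]

lemma IsClosed.mem_of_dist_le_geometric {C : Set α} (hC : IsClosed C) {u v : ℕ → α} {c : α}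
    (hvC : ∀ n, v n ∈ C) {M K ρ : ℝ} (hρ0 : 0 ≤ ρ) (hρ1 : ρ < 1)
    (hu : ∀ n, dist (u n) c ≤ M * ρ ^ n) (huv : ∀ n, dist (u n) (v n) ≤ K * ρ ^ n) : c ∈ C := by
  have hρn : Tendsto (fun n => (K + M) * ρ ^ n) atTop (𝓝 0) := by
    simpa using (tendsto_pow_atTop_nhds_zero_of_lt_one hρ0 hρ1).const_mul (K + M)
  have hv : Tendsto v atTop (𝓝 c) := tendsto_iff_dist_tendsto_zero.2 <|
    squeeze_zero (fun _ => dist_nonneg) (fun n => by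
      linarith [dist_triangle_left (v n) c (u n), hu n, huv n]) hρn
  exact hC.mem_of_tendsto hv (Eventually.of_forall hvC)

end Metric

section MARP

variable {X : Type*} [NormedAddCommGroup X] [InnerProductSpace ℝ X] {A B S : Set X}
  {lam mu : ℕ → ℝ} {a x b Y : ℕ → X}

lemma real_inner_sub_sub_le_of_swap {z p q : X} {θ : ℝ}
    (h : ⟪q - z, z - p⟫ ≤ θ * ‖q - z‖ * ‖z - p‖) : ⟪p - z, z - q⟫ ≤ θ * ‖p - z‖ * ‖z - q‖ := by
  rwa [← inner_neg_neg, neg_sub, neg_sub, real_inner_comm, norm_sub_rev q, norm_sub_rev z p,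
    mul_right_comm] at h

namespace IsMARP

lemma x_eq (h : IsMARP A B lam mu a x b Y) (n : ℕ) : x n = lineMap (Y n) (a n) (lam n) := by
  rw [lineMap_apply_module]; exact (h n).2.1

lemma Y_succ_eq (h : IsMARP A B lam mu a x b Y) (n : ℕ) :
    Y (n + 1) = lineMap (x n) (b n) (mu n) := by
  rw [lineMap_apply_module]; exact (h n).2.2.2

lemma mem_projSet_x (h : IsMARP A B lam mu a x b Y) (hlam : ∀ n, lam n ∈ Set.Icc (0 : ℝ) 1)
    (n : ℕ) : a n ∈ projSet A (x n) :=
  h.x_eq n ▸ mem_projSet_lineMap (h n).1 (hlam n)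

lemma mem_projSet_Y_succ (h : IsMARP A B lam mu a x b Y) (hmu : ∀ n, mu n ∈ Set.Icc (0 : ℝ) 1)
    (n : ℕ) : b n ∈ projSet B (Y (n + 1)) :=
  h.Y_succ_eq n ▸ mem_projSet_lineMap (h n).2.2.1 (hmu n)

lemma mem_of_projAbsorbing (h : IsMARP A B lam mu a x b Y) (hSA : ProjAbsorbing A S)
    (hSB : ProjAbsorbing B S) (hlam : ∀ n, lam n ∈ Set.Icc (0 : ℝ) 1)
    (hmu : ∀ n, mu n ∈ Set.Icc (0 : ℝ) 1) (hstart : Y 0 ∈ S) (n : ℕ) : Y n ∈ S ∧ x n ∈ S := by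
  have hx : ∀ n, Y n ∈ S → x n ∈ S := fun n hY =>
    hSA _ hY _ (h n).1 (h.x_eq n ▸ lineMap_mem_segment ℝ _ _ (hlam n))
  have hY : ∀ n, Y n ∈ S := by
    intro n
    induction n with
    | zero => exact hstart
    | succ n ih =>
      exact hSB _ (hx n ih) _ (h n).2.2.1 (h.Y_succ_eq n ▸ lineMap_mem_segment ℝ _ _ (hmu n))
  exact ⟨hY n, hx n (hY n)⟩

lemma max_dist_succ_le (h : IsMARP A B lam mu a x b Y) (hlam : ∀ n, lam n ∈ Set.Ioc (0 : ℝ) 1)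
    (hmu : ∀ n, mu n ∈ Set.Ioc (0 : ℝ) 1) {θ ρ : ℝ} (hθ : 0 ≤ θ)
    (hCQ : ∀ z ∈ S, ∀ p ∈ projSet A z, ∀ q ∈ projSet B z,
      ⟪p - z, z - q⟫ ≤ θ * ‖p - z‖ * ‖z - q‖)
    (hS : ∀ n, Y n ∈ S ∧ x n ∈ S) (hρ0 : 0 ≤ ρ) (hρ1 : ρ ≤ 1)
    (hρ : ∀ n, marpRate θ lam n ≤ ρ ^ 2 ∧ marpRate θ mu n ≤ ρ ^ 2) (n : ℕ) :
    max (dist (Y (n + 1)) (x (n + 1))) (dist (x (n + 1)) (Y (n + 2))) ≤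
      ρ * max (dist (Y n) (x n)) (dist (x n) (Y (n + 1))) := by
  have hlam' n : lam n ∈ Set.Icc (0 : ℝ) 1 := Set.Ioc_subset_Icc_self (hlam n)
  have hmu' n : mu n ∈ Set.Icc (0 : ℝ) 1 := Set.Ioc_subset_Icc_self (hmu n)
  set m := max (dist (Y n) (x n)) (dist (x n) (Y (n + 1)))
  have hYx : dist (Y (n + 1)) (x (n + 1)) ≤ ρ * m := by
    rw [h.x_eq (n + 1)]
    exact dist_relaxedStep_le (h n).1.1 (hlam n).1 (hlam n).2 (h.x_eq n) hθ
      (hCQ _ (hS n).2 _ (h.mem_projSet_x hlam' n) _ (h n).2.2.1) (hmu n).1.le (h.Y_succ_eq n)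
      (h (n + 1)).1 (hlam (n + 1)).1.le hρ0 (hρ n).1
  have hxY : dist (x (n + 1)) (Y (n + 2)) ≤
      ρ * max (dist (x n) (Y (n + 1))) (dist (Y (n + 1)) (x (n + 1))) := by
    rw [h.Y_succ_eq (n + 1)]
    exact dist_relaxedStep_le (h n).2.2.1.1 (hmu n).1 (hmu n).2 (h.Y_succ_eq n) hθ
      (real_inner_sub_sub_le_of_swap
        (hCQ _ (hS (n + 1)).1 _ (h (n + 1)).1 _ (h.mem_projSet_Y_succ hmu' n)))
      (hlam (n + 1)).1.le (h.x_eq (n + 1)) (h (n + 1)).2.2.1 (hmu (n + 1)).1.le hρ0 (hρ n).2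
  have hm : 0 ≤ m := dist_nonneg.trans (le_max_left _ _)
  refine max_le hYx (hxY.trans (mul_le_mul_of_nonneg_left (max_le (le_max_right _ _) ?_) hρ0))
  exact hYx.trans (mul_le_of_le_one_left hm hρ1)

lemma dist_le_geometric (h : IsMARP A B lam mu a x b Y) (hlam : ∀ n, lam n ∈ Set.Ioc (0 : ℝ) 1)
    (hmu : ∀ n, mu n ∈ Set.Ioc (0 : ℝ) 1) {θ ρ : ℝ} (hθ : 0 ≤ θ)
    (hCQ : ∀ z ∈ S, ∀ p ∈ projSet A z, ∀ q ∈ projSet B z,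
      ⟪p - z, z - q⟫ ≤ θ * ‖p - z‖ * ‖z - q‖)
    (hS : ∀ n, Y n ∈ S ∧ x n ∈ S) (hρ0 : 0 ≤ ρ) (hρ1 : ρ ≤ 1)
    (hρ : ∀ n, marpRate θ lam n ≤ ρ ^ 2 ∧ marpRate θ mu n ≤ ρ ^ 2) (n : ℕ) :
    dist (x n) (Y (n + 1)) ≤ max (dist (Y 0) (x 0)) (dist (x 0) (Y 1)) * ρ ^ n ∧
      dist (Y (n + 1)) (x (n + 1)) ≤ max (dist (Y 0) (x 0)) (dist (x 0) (Y 1)) * ρ ^ n := by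
  set m := fun n => max (dist (Y n) (x n)) (dist (x n) (Y (n + 1)))
  have hgeo (n : ℕ) : m n ≤ m 0 * ρ ^ n := by
    rw [mul_comm]
    exact le_geom hρ0 n fun k _ => h.max_dist_succ_le hlam hmu hθ hCQ hS hρ0 hρ1 hρ k
  refine ⟨(le_max_right _ _).trans (hgeo n), (le_max_left _ _).trans <| (hgeo (n + 1)).trans ?_⟩
  exact mul_le_mul_of_nonneg_left (pow_le_pow_of_le_one hρ0 hρ1 n.le_succ)
    (dist_nonneg.trans (le_max_left _ _))

end IsMARP

end MARP

theorem marp_global_linear_convergence_general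
    {X : Type*} [NormedAddCommGroup X] [InnerProductSpace ℝ X] [FiniteDimensional ℝ X]
    (A B : Set X) (hAclosed : IsClosed A)
    (hBclosed : IsClosed B)
    (S : Set X) (hSA : ProjAbsorbing A S) (hSB : ProjAbsorbing B S)
    (lam mu : ℕ → ℝ) (hlam : ∀ n, lam n ∈ Set.Ioc (0 : ℝ) 1)
    (hmu : ∀ n, mu n ∈ Set.Ioc (0 : ℝ) 1)
    (hlam_mono : ∀ n : ℕ, lam (n + 1) ≤ lam n) (hmu_mono : ∀ n : ℕ, mu (n + 1) ≤ mu n)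
    (laminf muinf : ℝ)
    (hlaminf : Tendsto lam atTop (nhds laminf)) (hmuinf : Tendsto mu atTop (nhds muinf))
    (hα₀lt : max (lam 0) (mu 0) < 1) (hαinf : 0 < min laminf muinf)
    (θ : ℝ) (hθ : θ ∈ Set.Ico (0 : ℝ) 1)
    (hCQ : ∀ z ∈ S, ∀ p ∈ projSet A z, ∀ q ∈ projSet B z,
      ⟪p - z, z - q⟫ ≤ θ * ‖p - z‖ * ‖z - q‖)
    (a x b Y : ℕ → X) (hMARP : IsMARP A B lam mu a x b Y) (hstart : Y 0 ∈ S)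
    (ρhat : ℝ)
    (hρhat : ρhat = Real.sqrt (⨆ n : ℕ, max
      ((lam (n + 1) / lam n) ^ 2 *
        ((lam n) ^ 2 + (1 - lam n) ^ 2 + 2 * θ * lam n * (1 - lam n)))
      ((mu (n + 1) / mu n) ^ 2 *
        ((mu n) ^ 2 + (1 - mu n) ^ 2 + 2 * θ * mu n * (1 - mu n))))) :
    0 < ρhat ∧ ρhat < 1 ∧
    ∃ cbar ∈ A ∩ B, ∃ M : ℝ, 0 ≤ M ∧
      ∀ n : ℕ, max (‖x n - cbar‖) (‖Y (n + 1) - cbar‖) ≤ M * ρhat ^ n := by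
  obtain ⟨hlam0, hmu0⟩ := max_lt_iff.1 hα₀lt
  obtain ⟨hlaminf_pos, hmuinf_pos⟩ := lt_min_iff.1 hαinf
  have hlam_anti := antitone_nat_of_succ_le hlam_mono
  have hmu_anti := antitone_nat_of_succ_le hmu_mono
  obtain ⟨hρ0, hρ1, hρ⟩ := sqrt_iSup_max_bounds (f := marpRate θ lam) (g := marpRate θ mu)
    (marpRate_pos hθ.1 hlam 0)
    (exists_lt_one_forall_marpRate_le hθ hlam hlam_anti hlaminf hlaminf_pos hlam0)
    (exists_lt_one_forall_marpRate_le hθ hmu hmu_anti hmuinf hmuinf_pos hmu0) hρhat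
  have hS := hMARP.mem_of_projAbsorbing hSA hSB (fun n => Set.Ioc_subset_Icc_self (hlam n))
    (fun n => Set.Ioc_subset_Icc_self (hmu n)) hstart
  have hgeo := hMARP.dist_le_geometric hlam hmu hθ.1 hCQ hS hρ0.le hρ1.le hρ
  set m0 := max (dist (Y 0) (x 0)) (dist (x 0) (Y 1))
  obtain ⟨c, M, hM, hc⟩ :=
    exists_dist_le_geometric_of_alternating hρ1 (fun n => (hgeo n).1) (fun n => (hgeo n).2)
  have hcA : c ∈ A := hAclosed.mem_of_dist_le_geometric (v := fun n => a (n + 1))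
    (fun n => (hMARP (n + 1)).1.1) hρ0.le hρ1 (fun n => (hc n).2) (K := m0 / laminf) fun n => by
      rw [div_mul_eq_mul_div]
      exact dist_le_div_of_dist_lineMap_le hlaminf_pos (hlam_anti.le_of_tendsto hlaminf _)
        (hMARP.x_eq (n + 1) ▸ (hgeo n).2)
  have hcB : c ∈ B := hBclosed.mem_of_dist_le_geometric (v := b)
    (fun n => (hMARP n).2.2.1.1) hρ0.le hρ1 (fun n => (hc n).1) (K := m0 / muinf) fun n => by
      rw [div_mul_eq_mul_div]
      exact dist_le_div_of_dist_lineMap_le hmuinf_pos (hmu_anti.le_of_tendsto hmuinf _)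
        (hMARP.Y_succ_eq n ▸ (hgeo n).1)
  refine ⟨hρ0, hρ1, c, ⟨hcA, hcB⟩, M, hM, fun n => ?_⟩
  simpa only [dist_eq_norm] using max_le (hc n).1 (hc n).2

/-- Corollary 5.10 (global linear convergence of the MARP). -/
theorem marp_global_linear_convergence
    {X : Type*} [NormedAddCommGroup X] [InnerProductSpace ℝ X] [FiniteDimensional ℝ X]
    (A B : Set X) (hA : A.Nonempty) (hAclosed : IsClosed A)
    (hB : B.Nonempty) (hBclosed : IsClosed B)
    (S : Set X) (hSA : ProjAbsorbing A S) (hSB : ProjAbsorbing B S)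
    (lam mu : ℕ → ℝ) (hlam : ∀ n, lam n ∈ Set.Ioc (0 : ℝ) 1)
    (hmu : ∀ n, mu n ∈ Set.Ioc (0 : ℝ) 1)
    (hlam_mono : ∀ n : ℕ, lam (n + 1) ≤ lam n) (hmu_mono : ∀ n : ℕ, mu (n + 1) ≤ mu n)
    (laminf muinf : ℝ)
    (hlaminf : Tendsto lam atTop (nhds laminf)) (hmuinf : Tendsto mu atTop (nhds muinf))
    (hα₀lt : max (lam 0) (mu 0) < 1) (hαinf : 0 < min laminf muinf)
    (θ : ℝ) (hθ : θ ∈ Set.Ico (0 : ℝ) 1)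
    (hCQ : ∀ z ∈ S, ∀ p ∈ projSet A z, ∀ q ∈ projSet B z,
      ⟪p - z, z - q⟫ ≤ θ * ‖p - z‖ * ‖z - q‖)
    (a x b Y : ℕ → X) (hMARP : IsMARP A B lam mu a x b Y) (hstart : Y 0 ∈ S)
    (ρhat : ℝ)
    (hρhat : ρhat = Real.sqrt (⨆ n : ℕ, max
      ((lam (n + 1) / lam n) ^ 2 *
        ((lam n) ^ 2 + (1 - lam n) ^ 2 + 2 * θ * lam n * (1 - lam n)))
      ((mu (n + 1) / mu n) ^ 2 *
        ((mu n) ^ 2 + (1 - mu n) ^ 2 + 2 * θ * mu n * (1 - mu n))))) :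
    0 < ρhat ∧ ρhat < 1 ∧
    ∃ cbar ∈ A ∩ B, ∃ M : ℝ, 0 ≤ M ∧
      ∀ n : ℕ, max (‖x n - cbar‖) (‖Y (n + 1) - cbar‖) ≤ M * ρhat ^ n :=
  marp_global_linear_convergence_general A B hAclosed hBclosed S hSA hSB lam mu hlam hmu hlam_mono
    hmu_mono laminf muinf hlaminf hmuinf hα₀lt hαinf θ hθ hCQ a x b Y hMARP hstart ρhat hρhat
end

section
/- Let (λ_n) and (μ_n) be nonincreasing sequences in (0,1] with limits λ_∞ and μ_∞, and set α_∞ := min{λ_∞, μ_∞}. Let ε > 0 and θ ∈ [0,1) be such that (1−θ)α_∞ > 2ε, and assume α_∞ > 0. Define κ̂ := sup_{n∈ℕ} max{ (λ_{n+1}/λ_n)(θλ_n + 2ε + 1 − λ_n), (μ_{n+1}/μ_n)(θμ_n + 2ε + 1 − μ_n) }. Then 0 < κ̂ ≤ 1 − ((1−θ)α_∞ − 2ε) < 1. -/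
open Filter Topology

/-!
Each term of the supremum is a ratio `f (n+1) / f n ≤ 1` times `1 - ((1 - θ) f n - 2ε)`, and a
nonincreasing sequence stays above its limit, hence above `α_∞`. Positivity is seen on the
term `n = 0`.
-/

/-- The `n`-th term of the supremum defining `κ̂`, for one of the two step-size sequences. -/
noncomputable def rateFactor (θ ε : ℝ) (f : ℕ → ℝ) (n : ℕ) : ℝ :=
  f (n + 1) / f n * (θ * f n + 2 * ε + 1 - f n)

lemma rateFactor_pos {θ ε : ℝ} {f : ℕ → ℝ} (hθ : 0 ≤ θ) (hε : 0 < ε)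
    (hf : ∀ n, f n ∈ Set.Ioc (0 : ℝ) 1) (n : ℕ) : 0 < rateFactor θ ε f n := by
  obtain ⟨hfn_pos, hfn_le⟩ := hf n
  have hsecond : 0 < θ * f n + 2 * ε + 1 - f n := by nlinarith [mul_nonneg hθ hfn_pos.le]
  exact mul_pos (div_pos (hf (n + 1)).1 hfn_pos) hsecond

lemma rateFactor_le {θ ε a : ℝ} {f : ℕ → ℝ} {n : ℕ} (hθ : θ ∈ Set.Icc (0 : ℝ) 1) (hε : 0 ≤ ε)
    (hsucc_pos : 0 < f (n + 1)) (hsucc_le : f (n + 1) ≤ f n) (hf_le_one : f n ≤ 1)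
    (ha : a ≤ f n) : rateFactor θ ε f n ≤ 1 - ((1 - θ) * a - 2 * ε) := by
  obtain ⟨hθ0, hθ1⟩ := hθ
  have hratio : f (n + 1) / f n ≤ 1 := div_le_one_of_le₀ hsucc_le (hsucc_pos.le.trans hsucc_le)
  have hsecond : 0 ≤ θ * f n + 2 * ε + 1 - f n := by
    nlinarith [mul_nonneg hθ0 (hsucc_pos.le.trans hsucc_le)]
  calc rateFactor θ ε f n ≤ θ * f n + 2 * ε + 1 - f n := mul_le_of_le_one_left hsecond hratio
    _ = 1 - ((1 - θ) * f n - 2 * ε) := by ring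
    _ ≤ 1 - ((1 - θ) * a - 2 * ε) := by nlinarith

lemma rateFactor_le_of_tendsto {θ ε a finf : ℝ} {f : ℕ → ℝ} (hθ : θ ∈ Set.Icc (0 : ℝ) 1)
    (hε : 0 ≤ ε) (hf : ∀ n, f n ∈ Set.Ioc (0 : ℝ) 1) (hf_mono : ∀ n, f (n + 1) ≤ f n)
    (hf_lim : Tendsto f atTop (𝓝 finf)) (ha : a ≤ finf) (n : ℕ) :
    rateFactor θ ε f n ≤ 1 - ((1 - θ) * a - 2 * ε) :=
  rateFactor_le hθ hε (hf (n + 1)).1 (hf_mono n) (hf n).2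
    (ha.trans ((antitone_nat_of_succ_le hf_mono).le_of_tendsto hf_lim n))

theorem kappa_rate_constant_bound_general
    (lam mu : ℕ → ℝ) (hlam : ∀ n, lam n ∈ Set.Ioc (0 : ℝ) 1)
    (hmu : ∀ n, mu n ∈ Set.Ioc (0 : ℝ) 1)
    (hlam_mono : ∀ n : ℕ, lam (n + 1) ≤ lam n) (hmu_mono : ∀ n : ℕ, mu (n + 1) ≤ mu n)
    (laminf muinf : ℝ)
    (hlaminf : Tendsto lam atTop (nhds laminf)) (hmuinf : Tendsto mu atTop (nhds muinf))
    (αinf : ℝ) (hαinf : αinf = min laminf muinf)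
    (ε : ℝ) (hε : 0 < ε) (θ : ℝ) (hθ : θ ∈ Set.Ico (0 : ℝ) 1)
    (hεθ : 2 * ε < (1 - θ) * αinf)
    (κhat : ℝ)
    (hκhat : κhat = ⨆ n : ℕ, max
      ((lam (n + 1) / lam n) * (θ * lam n + 2 * ε + 1 - lam n))
      ((mu (n + 1) / mu n) * (θ * mu n + 2 * ε + 1 - mu n))) :
    0 < κhat ∧ κhat ≤ 1 - ((1 - θ) * αinf - 2 * ε) ∧ 1 - ((1 - θ) * αinf - 2 * ε) < 1 := by
  have hθ' : θ ∈ Set.Icc (0 : ℝ) 1 := Set.Ico_subset_Icc_self hθ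
  have hbound : ∀ n, max (rateFactor θ ε lam n) (rateFactor θ ε mu n)
      ≤ 1 - ((1 - θ) * αinf - 2 * ε) := fun n =>
    max_le
      (rateFactor_le_of_tendsto hθ' hε.le hlam hlam_mono hlaminf (hαinf ▸ min_le_left _ _) n)
      (rateFactor_le_of_tendsto hθ' hε.le hmu hmu_mono hmuinf (hαinf ▸ min_le_right _ _) n)
  have hbdd : BddAbove (Set.range fun n => max (rateFactor θ ε lam n) (rateFactor θ ε mu n)) :=
    ⟨_, Set.forall_mem_range.2 hbound⟩
  have hpos : 0 < ⨆ n, max (rateFactor θ ε lam n) (rateFactor θ ε mu n) :=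
    (rateFactor_pos hθ.1 hε hlam 0).trans_le ((le_max_left _ _).trans (le_ciSup hbdd 0))
  subst hκhat
  exact ⟨hpos, ciSup_le hbound, by linarith⟩

/-- Lemma 6.3: bound on the rate constant κ̂. -/
theorem kappa_rate_constant_bound
    (lam mu : ℕ → ℝ) (hlam : ∀ n, lam n ∈ Set.Ioc (0 : ℝ) 1)
    (hmu : ∀ n, mu n ∈ Set.Ioc (0 : ℝ) 1)
    (hlam_mono : ∀ n : ℕ, lam (n + 1) ≤ lam n) (hmu_mono : ∀ n : ℕ, mu (n + 1) ≤ mu n)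
    (laminf muinf : ℝ)
    (hlaminf : Tendsto lam atTop (nhds laminf)) (hmuinf : Tendsto mu atTop (nhds muinf))
    (αinf : ℝ) (hαinf : αinf = min laminf muinf) (hαinf_pos : 0 < αinf)
    (ε : ℝ) (hε : 0 < ε) (θ : ℝ) (hθ : θ ∈ Set.Ico (0 : ℝ) 1)
    (hεθ : 2 * ε < (1 - θ) * αinf)
    (κhat : ℝ)
    (hκhat : κhat = ⨆ n : ℕ, max
      ((lam (n + 1) / lam n) * (θ * lam n + 2 * ε + 1 - lam n))
      ((mu (n + 1) / mu n) * (θ * mu n + 2 * ε + 1 - mu n))) :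
    0 < κhat ∧ κhat ≤ 1 - ((1 - θ) * αinf - 2 * ε) ∧ 1 - ((1 - θ) * αinf - 2 * ε) < 1 :=
  kappa_rate_constant_bound_general lam mu hlam hmu hlam_mono hmu_mono laminf muinf hlaminf hmuinf
    αinf hαinf ε hε θ hθ hεθ κhat hκhat
end
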